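/- arXiv:1709.07023 — 2 statements merged into one kernel-verified Lean document; each statement's English description precedes it below -/
import Mathlib

section
/- Let (V_n) be a sequence of potentials V_n = V_{ν_n} − B with ν_n nonnegative 2π-periodic measures, such that the lowest Bloch eigenvalues ε^{V_n}_{q=0} are bounded in n and ν_n(Γ) → ∞. Let u_n be the normalized positive ground state at q=0 and α_n = min_Γ u_n. Then α_n ∫_Γ u_n dν_n → 0 and α_n² ν_n(Γ) → 0 as n → ∞. -/
/-!
Testing the weak eigenvalue equation against `u_n` itself drops the nonnegative kinetic term and
gives `∫_Γ u_n² dν_n ≤ ε_n + B`; since `0 < α_n ≤ u_n`, this yields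
`α_n² ν_n(Γ) ≤ α_n ∫_Γ u_n dν_n ≤ ε_n + B`, so `α_n → 0` because `ν_n(Γ) → ∞`.
Testing against the constant `1` gives `∫_Γ u_n dν_n = (ε_n + B) ∫_Γ u_n`, which is bounded because
`∫_Γ u_n ≤ (|Γ| + ∫_Γ u_n²) / 2`. Hence `α_n ∫_Γ u_n dν_n → 0`, and `α_n² ν_n(Γ)` is squeezed
between `0` and this product.
-/

open MeasureTheory Real Filter

theorem IsCompact.integrableOn_of_continuous {X E : Type*} [TopologicalSpace X] [MeasurableSpace X]
    [OpensMeasurableSpace X] [NormedAddCommGroup E] [SecondCountableTopologyEither X E]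
    {μ : Measure X} {s K : Set X} {f : X → E} (hK : IsCompact K) (hf : Continuous f)
    (hs : MeasurableSet s) (hsK : s ⊆ K) (hμs : μ s ≠ ⊤) : IntegrableOn f s μ := by
  obtain ⟨M, hM⟩ := hK.exists_bound_of_continuousOn hf.continuousOn
  refine Measure.integrableOn_of_bounded hμs hf.aestronglyMeasurable (M := M) ?_
  filter_upwards [ae_restrict_mem hs] with x hx
  exact hM x (hsK hx)

section SetIntegral

variable {X : Type*} [MeasurableSpace X] {μ : Measure X} {s : Set X} {f : X → ℝ} {a : ℝ}

theorem setIntegral_le_half_measureReal_add_setIntegral_sq (hμs : μ s ≠ ⊤)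
    (hf : IntegrableOn f s μ) (hf2 : IntegrableOn (fun x => f x ^ 2) s μ) :
    ∫ x in s, f x ∂μ ≤ (μ.real s + ∫ x in s, f x ^ 2 ∂μ) / 2 := by
  have hone : IntegrableOn (fun _ => (1 : ℝ)) s μ := integrableOn_const hμs
  calc ∫ x in s, f x ∂μ ≤ ∫ x in s, (1 + f x ^ 2) / 2 ∂μ :=
        integral_mono hf ((hone.add hf2).div_const 2)
          fun x => by nlinarith [sq_nonneg (f x - 1)]
    _ = (μ.real s + ∫ x in s, f x ^ 2 ∂μ) / 2 := by
        rw [integral_div, integral_add hone hf2, setIntegral_const, smul_eq_mul, mul_one]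

theorem sq_mul_measureReal_le_mul_setIntegral (hs : MeasurableSet s) (hμs : μ s ≠ ⊤)
    (hf : IntegrableOn f s μ) (ha : 0 ≤ a) (hle : ∀ x ∈ s, a ≤ f x) :
    a ^ 2 * μ.real s ≤ a * ∫ x in s, f x ∂μ := by
  rw [← integral_const_mul]
  refine setIntegral_ge_of_const_le_real hs hμs (fun x hx => ?_) (hf.const_mul a)
  rw [pow_two]
  exact mul_le_mul_of_nonneg_left (hle x hx) ha

theorem mul_setIntegral_le_setIntegral_sq (hs : MeasurableSet s) (hf : IntegrableOn f s μ)
    (hf2 : IntegrableOn (fun x => f x ^ 2) s μ) (ha : 0 ≤ a) (hle : ∀ x ∈ s, a ≤ f x) :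
    a * ∫ x in s, f x ∂μ ≤ ∫ x in s, f x ^ 2 ∂μ := by
  rw [← integral_const_mul]
  refine setIntegral_mono_on (hf.const_mul a) hf2 hs fun x hx => ?_
  rw [pow_two]
  exact mul_le_mul_of_nonneg_right (hle x hx) (ha.trans (hle x hx))

end SetIntegral

theorem tendsto_zero_of_sq_mul_le {ι : Type*} {l : Filter ι} {a m : ι → ℝ} {C : ℝ}
    (ha : ∀ i, 0 ≤ a i) (hle : ∀ i, a i ^ 2 * m i ≤ C) (hm : Tendsto m l atTop) :
    Tendsto a l (nhds 0) := by
  have hsq : Tendsto (fun i => a i ^ 2) l (nhds 0) := by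
    refine squeeze_zero' (Eventually.of_forall fun i => sq_nonneg _) ?_
      (hm.const_div_atTop C)
    filter_upwards [hm.eventually_gt_atTop 0] with i hi
    exact (le_div_iff₀ hi).2 (hle i)
  simpa [Real.sqrt_sq (ha _)] using hsq.sqrt

/-- The weak form, on the period cell `[-π, π)`, of `-u'' + (ν - B) u = ε u` with
`2π`-periodic test functions. -/
def IsPeriodicWeakEigenfunction (ν : Measure ℝ) (B ε : ℝ) (u : ℝ → ℝ) : Prop :=
  ∀ φ : ℝ → ℝ, Differentiable ℝ φ → Function.Periodic φ (2 * π) → Continuous (deriv φ) →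
    (∫ x in Set.Ico (-π) π, deriv u x * deriv φ x) + (∫ x in Set.Ico (-π) π, u x * φ x ∂ν)
      - B * ∫ x in Set.Ico (-π) π, u x * φ x = ε * ∫ x in Set.Ico (-π) π, u x * φ x

namespace IsPeriodicWeakEigenfunction

variable {ν : Measure ℝ} {B ε : ℝ} {u : ℝ → ℝ}

theorem setIntegral_eq (h : IsPeriodicWeakEigenfunction ν B ε u) :
    ∫ x in Set.Ico (-π) π, u x ∂ν = (ε + B) * ∫ x in Set.Ico (-π) π, u x := by
  have h1 := h (fun _ => 1) (differentiable_const 1) (fun _ => rfl)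
    (by simp only [deriv_const']; exact continuous_const)
  simp only [deriv_const', mul_zero, mul_one, integral_zero, zero_add] at h1
  linarith

theorem setIntegral_sq_le (h : IsPeriodicWeakEigenfunction ν B ε u) (hu : Differentiable ℝ u)
    (hper : Function.Periodic u (2 * π)) (hu' : Continuous (deriv u))
    (hnorm : ∫ x in Set.Ico (-π) π, u x ^ 2 = 1) :
    ∫ x in Set.Ico (-π) π, u x ^ 2 ∂ν ≤ ε + B := by
  have h1 := h u hu hper hu'
  simp only [← pow_two] at h1
  rw [hnorm, mul_one] at h1
  have hkin : 0 ≤ ∫ x in Set.Ico (-π) π, deriv u x ^ 2 :=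
    setIntegral_nonneg measurableSet_Ico fun x _ => sq_nonneg _
  linarith

theorem abs_setIntegral_le (h : IsPeriodicWeakEigenfunction ν B ε u) (hu : Continuous u)
    (hpos : ∀ x, 0 < u x) (hnorm : ∫ x in Set.Ico (-π) π, u x ^ 2 = 1) :
    |∫ x in Set.Ico (-π) π, u x ∂ν| ≤ |ε + B| * ((2 * π + 1) / 2) := by
  have hvol : volume (Set.Ico (-π) π) ≠ ⊤ := measure_Ico_lt_top.ne
  have hΓ : volume.real (Set.Ico (-π) π) = 2 * π := by
    rw [Real.volume_real_Ico, max_eq_left (by linarith [pi_pos])]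
    ring
  have hle := setIntegral_le_half_measureReal_add_setIntegral_sq hvol
    (isCompact_Icc.integrableOn_of_continuous hu measurableSet_Ico Set.Ico_subset_Icc_self
      hvol)
    (isCompact_Icc.integrableOn_of_continuous (hu.pow 2) measurableSet_Ico
      Set.Ico_subset_Icc_self hvol)
  rw [hΓ, hnorm] at hle
  have hnn : 0 ≤ ∫ x in Set.Ico (-π) π, u x :=
    setIntegral_nonneg measurableSet_Ico fun x _ => (hpos x).le
  rw [h.setIntegral_eq, abs_mul, abs_of_nonneg hnn]
  exact mul_le_mul_of_nonneg_left hle (abs_nonneg _)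

end IsPeriodicWeakEigenfunction

theorem stmt9_general (ν : ℕ → Measure ℝ) (B : ℝ) (ε α : ℕ → ℝ) (u : ℕ → ℝ → ℝ)
    (hfin : ∀ n, ν n (Set.Ico (-π) π) < ⊤)
    (huper : ∀ n, Function.Periodic (u n) (2 * π)) (hucont : ∀ n, Continuous (u n))
    (hudiff : ∀ n, Differentiable ℝ (u n)) (hdcont : ∀ n, Continuous (deriv (u n)))
    (hupos : ∀ n x, 0 < u n x)
    (hnorm : ∀ n, ∫ x in Set.Ico (-π) π, (u n x) ^ 2 = 1)
    (hweak : ∀ n, ∀ φ : ℝ → ℝ, Differentiable ℝ φ → Function.Periodic φ (2 * π) →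
      Continuous (deriv φ) →
      (∫ x in Set.Ico (-π) π, deriv (u n) x * deriv φ x)
        + (∫ x in Set.Ico (-π) π, u n x * φ x ∂(ν n))
        - B * ∫ x in Set.Ico (-π) π, u n x * φ x
        = ε n * ∫ x in Set.Ico (-π) π, u n x * φ x)
    (hα : ∀ n x, α n ≤ u n x) (hαmem : ∀ n, ∃ x, u n x = α n)
    (hbdd : ∃ C : ℝ, ∀ n, |ε n| ≤ C)
    (hmass : Tendsto (fun n => (ν n (Set.Ico (-π) π)).toReal) atTop atTop) :
    Tendsto (fun n => α n * ∫ x in Set.Ico (-π) π, u n x ∂(ν n)) atTop (nhds 0) ∧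
    Tendsto (fun n => (α n) ^ 2 * (ν n (Set.Ico (-π) π)).toReal) atTop (nhds 0) := by
  obtain ⟨C, hC⟩ := hbdd
  have hweak : ∀ n, IsPeriodicWeakEigenfunction (ν n) B (ε n) (u n) := hweak
  have hα0 : ∀ n, 0 ≤ α n := fun n => (hαmem n).elim fun x hx => hx ▸ (hupos n x).le
  have hint : ∀ n, IntegrableOn (u n) (Set.Ico (-π) π) (ν n) := fun n =>
    isCompact_Icc.integrableOn_of_continuous (hucont n) measurableSet_Ico
      Set.Ico_subset_Icc_self (hfin n).ne
  have hint2 : ∀ n, IntegrableOn (fun x => u n x ^ 2) (Set.Ico (-π) π) (ν n) := fun n =>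
    isCompact_Icc.integrableOn_of_continuous ((hucont n).pow 2) measurableSet_Ico
      Set.Ico_subset_Icc_self (hfin n).ne
  have hlower : ∀ n, α n ^ 2 * (ν n).real (Set.Ico (-π) π) ≤
      α n * ∫ x in Set.Ico (-π) π, u n x ∂(ν n) := fun n =>
    sq_mul_measureReal_le_mul_setIntegral measurableSet_Ico (hfin n).ne (hint n) (hα0 n)
      fun x _ => hα n x
  have hupper : ∀ n, α n * ∫ x in Set.Ico (-π) π, u n x ∂(ν n) ≤ C + B := fun n =>
    (mul_setIntegral_le_setIntegral_sq measurableSet_Ico (hint n) (hint2 n) (hα0 n)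
      fun x _ => hα n x).trans <|
    ((hweak n).setIntegral_sq_le (hudiff n) (huper n) (hdcont n) (hnorm n)).trans <| by
      linarith [(abs_le.1 (hC n)).2]
  have hαlim : Tendsto α atTop (nhds 0) :=
    tendsto_zero_of_sq_mul_le hα0 (fun n => (hlower n).trans (hupper n)) hmass
  have hprod : Tendsto (fun n => α n * ∫ x in Set.Ico (-π) π, u n x ∂(ν n)) atTop (nhds 0) :=
    hαlim.zero_mul_isBoundedUnder_le <| isBoundedUnder_of ⟨(C + |B|) * ((2 * π + 1) / 2), fun n =>
      ((hweak n).abs_setIntegral_le (hucont n) (hupos n) (hnorm n)).trans <|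
        mul_le_mul_of_nonneg_right ((abs_add_le _ _).trans (by linarith [hC n])) (by positivity)⟩
  exact ⟨hprod, squeeze_zero (fun n => mul_nonneg (sq_nonneg _) ENNReal.toReal_nonneg)
    hlower hprod⟩

/-- If `V_n = V_{ν_n} - B`, the ground state eigenvalues `ε^{V_n}_0` are bounded and
`ν_n(Γ) → ∞`, then with `u_n` the normalized positive ground states and `α_n = min_Γ u_n`,
one has `α_n ∫_Γ u_n dν_n → 0` and `α_n² ν_n(Γ) → 0`. -/
theorem stmt9 (ν : ℕ → Measure ℝ) (B : ℝ) (ε α : ℕ → ℝ) (u : ℕ → ℝ → ℝ)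
    (hper : ∀ n, ∀ s : Set ℝ, MeasurableSet s → ν n ((fun x => x + 2 * π) '' s) = ν n s)
    (hfin : ∀ n, ν n (Set.Ico (-π) π) < ⊤)
    (huper : ∀ n, Function.Periodic (u n) (2 * π)) (hucont : ∀ n, Continuous (u n))
    (hudiff : ∀ n, Differentiable ℝ (u n)) (hdcont : ∀ n, Continuous (deriv (u n)))
    (hupos : ∀ n x, 0 < u n x)
    (hnorm : ∀ n, ∫ x in Set.Ico (-π) π, (u n x) ^ 2 = 1)
    (hweak : ∀ n, ∀ φ : ℝ → ℝ, Differentiable ℝ φ → Function.Periodic φ (2 * π) →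
      Continuous (deriv φ) →
      (∫ x in Set.Ico (-π) π, deriv (u n) x * deriv φ x)
        + (∫ x in Set.Ico (-π) π, u n x * φ x ∂(ν n))
        - B * ∫ x in Set.Ico (-π) π, u n x * φ x
        = ε n * ∫ x in Set.Ico (-π) π, u n x * φ x)
    (hα : ∀ n x, α n ≤ u n x) (hαmem : ∀ n, ∃ x, u n x = α n)
    (hbdd : ∃ C : ℝ, ∀ n, |ε n| ≤ C)
    (hmass : Tendsto (fun n => (ν n (Set.Ico (-π) π)).toReal) atTop atTop) :
    Tendsto (fun n => α n * ∫ x in Set.Ico (-π) π, u n x ∂(ν n)) atTop (nhds 0) ∧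
    Tendsto (fun n => (α n) ^ 2 * (ν n (Set.Ico (-π) π)).toReal) atTop (nhds 0) :=
  stmt9_general ν B ε α u hfin huper hucont hudiff hdcont hupos hnorm hweak hα hαmem hbdd hmass
end

section
/- Let A be a self-adjoint operator on a finite-dimensional inner product space, let ε^N be a real number with ε^N ∉ σ(A), let u be a unit vector with ⟨u, A u⟩ = ε^N, and let ε ∈ ℝ. Define the residual r := (A − ε^N)u. Then ε^N − ε = ⟨r, (A − ε^N)^{−1}(A − ε)(A − ε^N)^{−1} r⟩. -/
open RealInnerProductSpace
open scoped InnerProductSpace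

/-! Since `εN ∉ σ(A)`, the operator `B = A - εN` is invertible, and it is symmetric, hence so is
`B⁻¹`. As `r = B u`, we get `B⁻¹ r = u`, and moving the outer `B⁻¹` across the inner product
turns the right-hand side into `⟪u, (A - ε) u⟫ = ⟪u, A u⟫ - ε ‖u‖² = εN - ε`. -/

theorem Module.End.isUnit_sub_smul_one_of_notMem_spectrum {R M : Type*} [CommRing R]
    [AddCommGroup M] [Module R M] {A : Module.End R M} {a : R} (ha : a ∉ spectrum R A) :
    IsUnit (A - a • 1) := by
  rw [← Algebra.algebraMap_eq_smul_one, IsUnit.sub_iff]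
  exact spectrum.notMem_iff.mp ha

namespace LinearMap.IsSymmetric

variable {𝕜 E : Type*} [RCLike 𝕜] [NormedAddCommGroup E] [InnerProductSpace 𝕜 E]

theorem sub_smul_one {T : Module.End 𝕜 E} (hT : T.IsSymmetric) (a : ℝ) :
    (T - (a : 𝕜) • 1).IsSymmetric :=
  hT.sub (LinearMap.IsSymmetric.id.smul (RCLike.conj_ofReal a))

theorem ringInverse {T : Module.End 𝕜 E} (hT : T.IsSymmetric) :
    (Ring.inverse T).IsSymmetric := by
  by_cases hunit : IsUnit T
  · intro x y
    have hTinv : ∀ z, T (Ring.inverse T z) = z := fun z => by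
      rw [← Module.End.mul_apply, Ring.mul_inverse_cancel T hunit, Module.End.one_apply]
    calc ⟪Ring.inverse T x, y⟫_𝕜 = ⟪Ring.inverse T x, T (Ring.inverse T y)⟫_𝕜 := by rw [hTinv]
      _ = ⟪T (Ring.inverse T x), Ring.inverse T y⟫_𝕜 := (hT _ _).symm
      _ = ⟪x, Ring.inverse T y⟫_𝕜 := by rw [hTinv]
  · rw [Ring.inverse_non_unit T hunit]
    exact LinearMap.IsSymmetric.zero

end LinearMap.IsSymmetric

theorem stmt13_general {E : Type*} [NormedAddCommGroup E] [InnerProductSpace ℝ E]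
    (A : Module.End ℝ E) (hA : A.IsSymmetric)
    (εN ε : ℝ) (hεN : εN ∉ spectrum ℝ A)
    (u : E) (hu : ‖u‖ = 1) (huA : ⟪u, A u⟫ = εN)
    (r : E) (hr : r = A u - εN • u) :
    εN - ε =
      ⟪r, (Ring.inverse (A - εN • (1 : Module.End ℝ E)))
        ((A - ε • (1 : Module.End ℝ E))
          ((Ring.inverse (A - εN • (1 : Module.End ℝ E))) r))⟫ := by
  set B := A - εN • (1 : Module.End ℝ E)
  have hB : IsUnit B := Module.End.isUnit_sub_smul_one_of_notMem_spectrum hεN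
  have hBinv_r : Ring.inverse B r = u := by
    have hr' : r = B u := by simp [hr, B]
    rw [hr', ← Module.End.mul_apply, Ring.inverse_mul_cancel B hB, Module.End.one_apply]
  have hBinv_sym : (Ring.inverse B).IsSymmetric := (hA.sub_smul_one εN).ringInverse
  rw [hBinv_r, ← hBinv_sym, hBinv_r, LinearMap.sub_apply, inner_sub_right, huA]
  simp [real_inner_smul_right, hu]

/-- Residual identity: for `A` self-adjoint on a finite-dimensional inner product space,
`ε^N ∉ σ(A)`, `u` a unit vector with `⟨u, Au⟩ = ε^N`, and `r = (A - ε^N)u`,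
`ε^N - ε = ⟨r, (A - ε^N)⁻¹ (A - ε) (A - ε^N)⁻¹ r⟩`. -/
theorem stmt13 {E : Type*} [NormedAddCommGroup E] [InnerProductSpace ℝ E]
    [FiniteDimensional ℝ E]
    (A : Module.End ℝ E) (hA : A.IsSymmetric)
    (εN ε : ℝ) (hεN : εN ∉ spectrum ℝ A)
    (u : E) (hu : ‖u‖ = 1) (huA : ⟪u, A u⟫ = εN)
    (r : E) (hr : r = A u - εN • u) :
    εN - ε =
      ⟪r, (Ring.inverse (A - εN • (1 : Module.End ℝ E)))
        ((A - ε • (1 : Module.End ℝ E))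
          ((Ring.inverse (A - εN • (1 : Module.End ℝ E))) r))⟫ :=
  stmt13_general A hA εN ε hεN u hu huA r hr
end
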